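/- arXiv:2605.13386 — 2 statements merged into one kernel-verified Lean document; each statement's English description precedes it below -/
import Mathlib

section
/- Let S = {s_1, ..., s_m} ⊂ ℝ^d, t ∈ (0,1], σ_t = 1 − (1 − σ_min)t, h = σ_t/t, and let u_t^S be the exact marginal velocity field induced by the empirical measure on S under the Gaussian OT path. Then for all x̃ ∈ ℝ^d, u_t^S(t·x̃) = x̃ + (m_h(x̃; S) − x̃)/σ_t, where m_h(x̃; S) is the Nadaraya–Watson local mean of S with Gaussian kernel at bandwidth h evaluated at x̃. -/
noncomputable def gaussianPhi (d : ℕ) (h : ℝ) (z : EuclideanSpace ℝ (Fin d)) : ℝ :=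
  (2 * Real.pi * h ^ 2) ^ (-(d : ℝ) / 2) * Real.exp (-‖z‖ ^ 2 / (2 * h ^ 2))

/-
By Tweedie's formula, the score of the Gaussian mixture `p(x) = (1/m) Σᵢ φ_σ(x - t sᵢ)` is
`∇ log p(x) = (Σᵢ wᵢ(x) t sᵢ - x) / σ²` with posterior weights `wᵢ(x) ∝ φ_σ(x - t sᵢ)`.
At `x = t x̃` the Gaussian rescales as `φ_σ(t z) = t⁻ᵈ φ_{σ/t}(z)`, and the factor `t⁻ᵈ` cancels in
the weights, so they are the Nadaraya–Watson weights at bandwidth `h = σ/t` and the posterior mean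
is `t m_h(x̃)`. Substituting into `u = x/t + (σ/t) ∇ log p` gives `x̃ + (m_h(x̃) - x̃)/σ`.
-/

open Finset

section GradientCalculus

variable {F : Type*} [NormedAddCommGroup F] [InnerProductSpace ℝ F] [CompleteSpace F]
  {f : F → ℝ} {g x : F}

theorem HasGradientAt.const_mul (hf : HasGradientAt f g x) (c : ℝ) :
    HasGradientAt (fun y => c * f y) (c • g) x := by
  rw [hasGradientAt_iff_hasFDerivAt, map_smul] at *
  exact hf.const_mul c

theorem HasGradientAt.fun_sum {ι : Type*} {u : Finset ι} {f : ι → F → ℝ} {g : ι → F}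
    (hf : ∀ i ∈ u, HasGradientAt (f i) (g i) x) :
    HasGradientAt (fun y => ∑ i ∈ u, f i y) (∑ i ∈ u, g i) x := by
  rw [hasGradientAt_iff_hasFDerivAt, map_sum]
  exact HasFDerivAt.fun_sum fun i hi => hasGradientAt_iff_hasFDerivAt.mp (hf i hi)

theorem HasGradientAt.log (hf : HasGradientAt f g x) (hx : f x ≠ 0) :
    HasGradientAt (fun y => Real.log (f y)) ((f x)⁻¹ • g) x := by
  rw [hasGradientAt_iff_hasFDerivAt, map_smul] at *
  exact hf.log hx

end GradientCalculus

theorem gaussianPhi_pos (d : ℕ) {σ : ℝ} (hσ : σ ≠ 0) (z : EuclideanSpace ℝ (Fin d)) :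
    0 < gaussianPhi d σ z := by
  unfold gaussianPhi
  positivity

theorem hasGradientAt_gaussianPhi_sub (d : ℕ) (σ : ℝ) (μ x : EuclideanSpace ℝ (Fin d)) :
    HasGradientAt (fun y => gaussianPhi d σ (y - μ))
      (((σ ^ 2)⁻¹ * gaussianPhi d σ (x - μ)) • (μ - x)) x := by
  have hexp := (((hasFDerivAt_id x).sub_const μ).norm_sq.const_mul (-(2 * σ ^ 2)⁻¹)).exp.const_mul
    ((2 * Real.pi * σ ^ 2) ^ (-(d : ℝ) / 2))
  rw [hasGradientAt_iff_hasFDerivAt]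
  refine (hexp.congr_fderiv ?_).congr_of_eventuallyEq (Filter.Eventually.of_forall fun y => ?_)
  · ext v
    simp only [gaussianPhi, id_eq, map_sub, map_smul, ContinuousLinearMap.comp_id,
      smul_apply, sub_apply, coe_innerSL_apply,
      InnerProductSpace.toDual_apply_apply, nsmul_eq_mul, smul_eq_mul]
    ring_nf
  · simp only [gaussianPhi, id]
    ring_nf

section NadarayaWatson

variable {d : ℕ} {ι : Type*} [Fintype ι]

noncomputable def nwWeight (d : ℕ) (h : ℝ) (s : ι → EuclideanSpace ℝ (Fin d)) (i : ι)
    (x : EuclideanSpace ℝ (Fin d)) : ℝ :=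
  gaussianPhi d h (x - s i) / ∑ j, gaussianPhi d h (x - s j)

noncomputable def nwMean (d : ℕ) (h : ℝ) (s : ι → EuclideanSpace ℝ (Fin d))
    (x : EuclideanSpace ℝ (Fin d)) : EuclideanSpace ℝ (Fin d) :=
  ∑ i, nwWeight d h s i x • s i

theorem sum_gaussianPhi_sub_pos [Nonempty ι] {σ : ℝ} (hσ : σ ≠ 0)
    (s : ι → EuclideanSpace ℝ (Fin d)) (x : EuclideanSpace ℝ (Fin d)) :
    0 < ∑ i, gaussianPhi d σ (x - s i) :=
  sum_pos (fun _ _ => gaussianPhi_pos d hσ _) univ_nonempty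

theorem sum_nwWeight [Nonempty ι] {h : ℝ} (hh : h ≠ 0) (s : ι → EuclideanSpace ℝ (Fin d))
    (x : EuclideanSpace ℝ (Fin d)) : ∑ i, nwWeight d h s i x = 1 := by
  simp only [nwWeight]
  rw [← sum_div, div_self]
  exact (sum_gaussianPhi_sub_pos hh s x).ne'

theorem nwMean_sub_self [Nonempty ι] {h : ℝ} (hh : h ≠ 0) (s : ι → EuclideanSpace ℝ (Fin d))
    (x : EuclideanSpace ℝ (Fin d)) : nwMean d h s x - x = ∑ i, nwWeight d h s i x • (s i - x) := by
  simp only [nwMean, smul_sub, sum_sub_distrib, ← sum_smul, sum_nwWeight hh, one_smul]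

theorem gaussianPhi_smul (d : ℕ) (σ : ℝ) {t : ℝ} (ht : 0 < t) (z : EuclideanSpace ℝ (Fin d)) :
    t ^ d * gaussianPhi d σ (t • z) = gaussianPhi d (σ / t) z := by
  have hrpow : (2 * Real.pi * (σ / t) ^ 2) ^ (-(d : ℝ) / 2)
      = t ^ d * (2 * Real.pi * σ ^ 2) ^ (-(d : ℝ) / 2) := by
    have ht2 : (t ^ 2)⁻¹ ^ (-(d : ℝ) / 2) = t ^ d := by
      rw [Real.inv_rpow (by positivity), ← Real.rpow_neg (by positivity), neg_div, neg_neg,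
        ← Real.rpow_natCast_mul ht.le, Nat.cast_ofNat, mul_div_cancel₀ _ two_ne_zero,
        Real.rpow_natCast]
    rw [div_pow, div_eq_mul_inv, ← mul_assoc, Real.mul_rpow (by positivity) (by positivity), ht2,
      mul_comm]
  simp only [gaussianPhi, hrpow, norm_smul, Real.norm_of_nonneg ht.le]
  field_simp

theorem nwWeight_smul {h : ℝ} {t : ℝ} (ht : 0 < t) (s : ι → EuclideanSpace ℝ (Fin d)) (i : ι)
    (x : EuclideanSpace ℝ (Fin d)) :
    nwWeight d h (fun j => t • s j) i (t • x) = nwWeight d (h / t) s i x := by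
  simp only [nwWeight, ← smul_sub, ← gaussianPhi_smul d h ht, ← mul_sum]
  exact (mul_div_mul_left _ _ (pow_pos ht d).ne').symm

theorem nwMean_smul {h : ℝ} {t : ℝ} (ht : 0 < t) (s : ι → EuclideanSpace ℝ (Fin d))
    (x : EuclideanSpace ℝ (Fin d)) :
    nwMean d h (fun j => t • s j) (t • x) = t • nwMean d (h / t) s x := by
  simp only [nwMean, nwWeight_smul ht, smul_sum, smul_comm t]

theorem hasGradientAt_log_gaussianMixture [Nonempty ι] (s : ι → EuclideanSpace ℝ (Fin d))
    {σ : ℝ} (hσ : σ ≠ 0) {c : ℝ} (hc : 0 < c) (x : EuclideanSpace ℝ (Fin d)) :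
    HasGradientAt (fun y => Real.log (c * ∑ i, gaussianPhi d σ (y - s i)))
      ((σ ^ 2)⁻¹ • (nwMean d σ s x - x)) x := by
  have hmixture_pos := sum_gaussianPhi_sub_pos hσ s x
  convert ((HasGradientAt.fun_sum fun i _ => hasGradientAt_gaussianPhi_sub d σ (s i) x).const_mul
    c).log (by positivity) using 1
  rw [nwMean_sub_self hσ, smul_smul, smul_sum, smul_sum]
  refine sum_congr rfl fun i _ => ?_
  rw [smul_smul, smul_smul, nwWeight]
  congr 1
  field_simp

end NadarayaWatson

theorem empirical_velocity_is_NW_general (d m : ℕ) (hm : 0 < m)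
    (s : Fin m → EuclideanSpace ℝ (Fin d))
    (σmin : ℝ) (hσmin : 0 < σmin)
    (t : ℝ) (ht : 0 < t) (ht1 : t ≤ 1)
    (σt h : ℝ) (hσt : σt = 1 - (1 - σmin) * t) (hh : h = σt / t)
    (p : EuclideanSpace ℝ (Fin d) → ℝ)
    (hp : ∀ x, p x = (1 / m) * ∑ i, gaussianPhi d σt (x - t • s i))
    (u : EuclideanSpace ℝ (Fin d) → EuclideanSpace ℝ (Fin d))
    (hu : ∀ x, u x = t⁻¹ • x + (σt / t) • gradient (fun y => Real.log (p y)) x)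
    (w : Fin m → EuclideanSpace ℝ (Fin d) → ℝ)
    (hw : ∀ i x, w i x = gaussianPhi d h (x - s i) / ∑ j, gaussianPhi d h (x - s j))
    (mh : EuclideanSpace ℝ (Fin d) → EuclideanSpace ℝ (Fin d))
    (hmh : ∀ x, mh x = ∑ i, w i x • s i) :
    ∀ xt : EuclideanSpace ℝ (Fin d),
      u (t • xt) = xt + σt⁻¹ • (mh xt - xt) := by
  intro xt
  subst hh
  have : Nonempty (Fin m) := Fin.pos_iff_nonempty.mp hm
  have hσt_pos : 0 < σt := by rw [hσt]; nlinarith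
  have hlogp : (fun y => Real.log (p y))
      = fun y => Real.log (1 / m * ∑ i, gaussianPhi d σt (y - t • s i)) := by
    simp only [hp]
  have hmh_eq : mh xt = nwMean d (σt / t) s xt := by simp only [hmh, hw, nwMean, nwWeight]
  have hscore := hasGradientAt_log_gaussianMixture (fun i => t • s i) hσt_pos.ne'
    (c := 1 / m) (by positivity) (t • xt)
  rw [hu, hlogp, hscore.gradient, nwMean_smul ht, hmh_eq, ← smul_sub, smul_smul, smul_smul,
    smul_smul, inv_mul_cancel₀ ht.ne', one_smul]
  congr 1
  field_simp

/-- Exact empirical OT-FM velocity field is a Nadaraya–Watson smoother: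
`u_t^S(t·x̃) = x̃ + (m_h(x̃; S) − x̃)/σ_t` with bandwidth `h = σ_t/t`. -/
theorem empirical_velocity_is_NW (d m : ℕ) (hm : 0 < m)
    (s : Fin m → EuclideanSpace ℝ (Fin d))
    (σmin : ℝ) (hσmin : 0 < σmin) (hσmin1 : σmin ≤ 1)
    (t : ℝ) (ht : 0 < t) (ht1 : t ≤ 1)
    (σt h : ℝ) (hσt : σt = 1 - (1 - σmin) * t) (hh : h = σt / t)
    (p : EuclideanSpace ℝ (Fin d) → ℝ)
    (hp : ∀ x, p x = (1 / m) * ∑ i, gaussianPhi d σt (x - t • s i))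
    (u : EuclideanSpace ℝ (Fin d) → EuclideanSpace ℝ (Fin d))
    (hu : ∀ x, u x = t⁻¹ • x + (σt / t) • gradient (fun y => Real.log (p y)) x)
    (w : Fin m → EuclideanSpace ℝ (Fin d) → ℝ)
    (hw : ∀ i x, w i x = gaussianPhi d h (x - s i) / ∑ j, gaussianPhi d h (x - s j))
    (mh : EuclideanSpace ℝ (Fin d) → EuclideanSpace ℝ (Fin d))
    (hmh : ∀ x, mh x = ∑ i, w i x • s i) :
    ∀ xt : EuclideanSpace ℝ (Fin d),
      u (t • xt) = xt + σt⁻¹ • (mh xt - xt) :=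
  empirical_velocity_is_NW_general d m hm s σmin hσmin t ht ht1 σt h hσt hh p hp u hu w hw mh hmh
end

section
/- Let x̃, s_1, ..., s_m ∈ ℝ^d, t ∈ (0,1], σ_t = 1 − (1 − σ_min)t, h = σ_t/t. A single cross-attention head with query x̃, keys and values {s_i}, logits ℓ_i = −‖x̃ − s_i‖²/(2h²), and output Attn(x̃) = Σ_i softmax(ℓ)_i · s_i, followed by the affine map A_t(x̃, z) = x̃ + (z − x̃)/σ_t, exactly computes the empirical OT-FM velocity: A_t(x̃, Attn(x̃)) = u_t^S(t·x̃). -/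
/-- A single Gaussian-kernel cross-attention head followed by the affine post-map
`A_t(x̃, z) = x̃ + (z − x̃)/σ_t` exactly computes the empirical OT-FM velocity
`u_t^S(t·x̃) = x̃ + (m_h(x̃;S) − x̃)/σ_t`. -/
theorem attention_realizes_velocity (d m : ℕ) (hm : 0 < m)
    (σmin : ℝ) (hσmin : 0 < σmin) (hσmin1 : σmin ≤ 1)
    (t : ℝ) (ht : 0 < t) (ht1 : t ≤ 1)
    (σt h : ℝ) (hσt : σt = 1 - (1 - σmin) * t) (hh : h = σt / t)
    (xt : EuclideanSpace ℝ (Fin d)) (s : Fin m → EuclideanSpace ℝ (Fin d))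
    (ℓ : Fin m → ℝ) (hℓ : ∀ i, ℓ i = -‖xt - s i‖ ^ 2 / (2 * h ^ 2))
    (Attn : EuclideanSpace ℝ (Fin d))
    (hAttn : Attn = ∑ i, (Real.exp (ℓ i) / ∑ j, Real.exp (ℓ j)) • s i)
    (A : EuclideanSpace ℝ (Fin d) → EuclideanSpace ℝ (Fin d) → EuclideanSpace ℝ (Fin d))
    (hA : ∀ x z, A x z = x + σt⁻¹ • (z - x))
    (w : Fin m → ℝ)
    (hw : ∀ i, w i = gaussianPhi d h (xt - s i) / ∑ j, gaussianPhi d h (xt - s j))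
    (mh uS : EuclideanSpace ℝ (Fin d))
    (hmh : mh = ∑ i, w i • s i)
    (huS : uS = xt + σt⁻¹ • (mh - xt)) :
    A xt Attn = uS := by
  have hσtpos : 0 < σt := by
    rw [hσt]; nlinarith
  have hC : 0 < (2 * Real.pi * h ^ 2) ^ (-(d : ℝ) / 2) := by
    have hhpos : 0 < h := by
      rw [hh]; positivity
    apply Real.rpow_pos_of_pos
    positivity
  set C := (2 * Real.pi * h ^ 2) ^ (-(d : ℝ) / 2) with hCdef
  have hphi : ∀ i, gaussianPhi d h (xt - s i) = C * Real.exp (ℓ i) := by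
    intro i
    rw [gaussianPhi, hℓ i]
  have hweq : ∀ i, w i = Real.exp (ℓ i) / ∑ j, Real.exp (ℓ j) := by
    intro i
    rw [hw i]
    simp only [hphi]
    rw [← Finset.mul_sum, mul_div_mul_left _ _ (ne_of_gt hC)]
  rw [hA, hAttn, huS, hmh]
  congr 3
  · exact Finset.sum_congr rfl fun i _ => by rw [hweq i]
end
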